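/- For a connected graph G with Laplacian L, resistance matrix R, and curvature vector μ, R + (1/2)·R·L·R = (μᵀRμ)·𝟙𝟙ᵀ. -/

import Mathlib

open scoped Classical
open Matrix

/-- A finite multigraph without loop edges, given by endpoint maps on an edge type. -/
structure Multigraph where
  V : Type
  E : Type
  [fintV : Fintype V]
  [fintE : Fintype E]
  fst : E → V
  snd : E → V
  no_loop : ∀ e, fst e ≠ snd e

namespace Multigraph

variable (G : Multigraph)

instance : Fintype G.V := G.fintV
instance : Fintype G.E := G.fintE

/-- One step along an edge of the subgraph with edge set `S`. -/
def step (S : Finset G.E) (u v : G.V) : Prop :=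
  ∃ e ∈ S, (G.fst e = u ∧ G.snd e = v) ∨ (G.fst e = v ∧ G.snd e = u)

/-- Two vertices are in the same component of the spanning subgraph with edge set `S`. -/
def reach (S : Finset G.E) : G.V → G.V → Prop :=
  Relation.EqvGen (G.step S)

/-- Number of connected components of the spanning subgraph with edge set `S`. -/
noncomputable def ncomp (S : Finset G.E) : ℕ :=
  Nat.card (Quotient (Relation.EqvGen.setoid (G.step S)))

/-- The graph is connected. -/
def IsConnected : Prop := G.ncomp Finset.univ = 1

/-- `S` is the edge set of a spanning tree. -/
def IsSpanningTree (S : Finset G.E) : Prop :=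
  G.ncomp S = 1 ∧ S.card + 1 = Fintype.card G.V

/-- `S` is the edge set of a two-component spanning forest. -/
def IsTwoForest (S : Finset G.E) : Prop :=
  G.ncomp S = 2 ∧ S.card + 2 = Fintype.card G.V

/-- `S` is the edge set of a three-component spanning forest. -/
def IsThreeForest (S : Finset G.E) : Prop :=
  G.ncomp S = 3 ∧ S.card + 3 = Fintype.card G.V

/-- κ(G): number of spanning trees. -/
noncomputable def kappa : ℕ := Nat.card {S : Finset G.E // G.IsSpanningTree S}

/-- κ₂(G): number of two-component spanning forests. -/
noncomputable def kappa2 : ℕ := Nat.card {S : Finset G.E // G.IsTwoForest S}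

/-- κ₂(x|y): number of two-forests with `x` and `y` in different components. -/
noncomputable def kappa2Sep (x y : G.V) : ℕ :=
  Nat.card {S : Finset G.E // G.IsTwoForest S ∧ ¬ G.reach S x y}

/-- κ₂(xy|q): number of two-forests with `x`, `y` in one component, `q` in the other. -/
noncomputable def kappa2Tog (x y q : G.V) : ℕ :=
  Nat.card {S : Finset G.E // G.IsTwoForest S ∧ G.reach S x y ∧ ¬ G.reach S x q}

/-- κ₃(x|y|q): number of three-forests with `x`, `y`, `q` in pairwise distinct components. -/
noncomputable def kappa3Sep (x y q : G.V) : ℕ :=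
  Nat.card {S : Finset G.E //
    G.IsThreeForest S ∧ ¬ G.reach S x y ∧ ¬ G.reach S x q ∧ ¬ G.reach S y q}

/-- Effective resistance: r(x,y) = κ₂(x|y)/κ(G). -/
noncomputable def res (x y : G.V) : ℝ := (G.kappa2Sep x y : ℝ) / (G.kappa : ℝ)

/-- Potential kernel: j_q(x,y) = κ₂(xy|q)/κ(G). -/
noncomputable def jfun (q x y : G.V) : ℝ := (G.kappa2Tog x y q : ℝ) / (G.kappa : ℝ)

/-- Cut size |∂F| of a two-forest with edge set `S`: edges joining the two components. -/
noncomputable def cutSize (S : Finset G.E) : ℕ :=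
  Nat.card {e : G.E // ¬ G.reach S (G.fst e) (G.snd e)}

/-- The curvature vector μ. -/
noncomputable def mu (x : G.V) : ℝ :=
  1 - (1/2) * ∑ e : G.E,
    (if G.fst e = x ∨ G.snd e = x then G.res (G.fst e) (G.snd e) else 0)

/-- The Laplacian matrix of `G`. -/
noncomputable def lap : Matrix G.V G.V ℝ := fun v w =>
  (if v = w then (Nat.card {e : G.E // G.fst e = v ∨ G.snd e = v} : ℝ) else 0)
    - (Nat.card {e : G.E // (G.fst e = v ∧ G.snd e = w) ∨ (G.fst e = w ∧ G.snd e = v)} : ℝ)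

/-- The effective resistance matrix of `G`. -/
noncomputable def resMatrix : Matrix G.V G.V ℝ := fun v w => G.res v w

end Multigraph
namespace Multigraph

variable {G : Multigraph}

lemma step_symm {S : Finset G.E} {u v : G.V} (h : G.step S u v) : G.step S v u := by
  obtain ⟨e, he, h⟩ := h; exact ⟨e, he, h.symm⟩

lemma reach_refl (S : Finset G.E) (x : G.V) : G.reach S x x := Relation.EqvGen.refl x

lemma reach_symm {S : Finset G.E} {x y : G.V} (h : G.reach S x y) : G.reach S y x :=
  Relation.EqvGen.symm x y h

lemma reach_trans {S : Finset G.E} {x y z : G.V} (h : G.reach S x y) (h' : G.reach S y z) :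
    G.reach S x z := Relation.EqvGen.trans x y z h h'

lemma reach_of_step {S : Finset G.E} {x y : G.V} (h : G.step S x y) : G.reach S x y :=
  Relation.EqvGen.rel x y h

lemma reach_mono {S S' : Finset G.E} (hS : S ⊆ S') {x y : G.V} (h : G.reach S x y) :
    G.reach S' x y := by
  induction h with
  | rel a b hab => exact reach_of_step (by obtain ⟨e, he, h⟩ := hab; exact ⟨e, hS he, h⟩)
  | refl a => exact reach_refl _ _
  | symm a b _ ih => exact reach_symm ih
  | trans a b c _ _ ih1 ih2 => exact reach_trans ih1 ih2

lemma reach_iff_rtg {S : Finset G.E} {x y : G.V} :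
    G.reach S x y ↔ Relation.ReflTransGen (G.step S) x y := by
  constructor
  · intro h
    induction h with
    | rel a b hab => exact Relation.ReflTransGen.single hab
    | refl a => exact Relation.ReflTransGen.refl
    | symm a b _ ih =>
      clear * - ih
      induction ih with
      | refl => exact Relation.ReflTransGen.refl
      | tail _ hbc ih => exact Relation.ReflTransGen.head (step_symm hbc) ih
    | trans a b c _ _ ih1 ih2 => exact ih1.trans ih2
  · intro h
    induction h with
    | refl => exact reach_refl _ _
    | tail _ hbc ih => exact reach_trans ih (reach_of_step hbc)

lemma reach_of_mem {S : Finset G.E} {e : G.E} (he : e ∈ S) :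
    G.reach S (G.fst e) (G.snd e) := reach_of_step ⟨e, he, Or.inl ⟨rfl, rfl⟩⟩

/-- If no edge of `S` is incident to `y`, then `y` is isolated. -/
lemma eq_of_reach_isolated {S : Finset G.E} {y : G.V}
    (h : ∀ e ∈ S, ¬ (G.fst e = y ∨ G.snd e = y)) {v : G.V} (hr : G.reach S y v) : v = y := by
  rw [reach_iff_rtg] at hr
  induction hr with
  | refl => rfl
  | tail _ hbc ih =>
    subst ih
    obtain ⟨e, he, hor⟩ := hbc
    rcases hor with ⟨h1, h2⟩ | ⟨h1, h2⟩
    · exact absurd (Or.inl h1) (h e he)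
    · exact absurd (Or.inr h2) (h e he)

/-- Characterization of reachability after inserting an edge. -/
lemma reach_insert_iff {S : Finset G.E} {e : G.E} {x y : G.V} :
    G.reach (insert e S) x y ↔ G.reach S x y ∨
      (G.reach S x (G.fst e) ∧ G.reach S (G.snd e) y) ∨
      (G.reach S x (G.snd e) ∧ G.reach S (G.fst e) y) := by
  constructor
  · intro h
    induction h with
    | rel a b hab =>
      obtain ⟨f, hf, hor⟩ := hab
      rcases Finset.mem_insert.mp hf with rfl | hfS
      · rcases hor with ⟨h1, h2⟩ | ⟨h1, h2⟩
        · subst h1; subst h2; exact Or.inr (Or.inl ⟨reach_refl _ _, reach_refl _ _⟩)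
        · subst h1; subst h2; exact Or.inr (Or.inr ⟨reach_refl _ _, reach_refl _ _⟩)
      · exact Or.inl (reach_of_step ⟨f, hfS, hor⟩)
    | refl a => exact Or.inl (reach_refl _ _)
    | symm a b _ ih =>
      rcases ih with h | ⟨h1, h2⟩ | ⟨h1, h2⟩
      · exact Or.inl (reach_symm h)
      · exact Or.inr (Or.inr ⟨reach_symm h2, reach_symm h1⟩)
      · exact Or.inr (Or.inl ⟨reach_symm h2, reach_symm h1⟩)
    | trans a b c _ _ ih1 ih2 =>
      rcases ih1 with h | ⟨h1, h2⟩ | ⟨h1, h2⟩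
      · rcases ih2 with h' | ⟨h1', h2'⟩ | ⟨h1', h2'⟩
        · exact Or.inl (reach_trans h h')
        · exact Or.inr (Or.inl ⟨reach_trans h h1', h2'⟩)
        · exact Or.inr (Or.inr ⟨reach_trans h h1', h2'⟩)
      · rcases ih2 with h' | ⟨h1', h2'⟩ | ⟨h1', h2'⟩
        · exact Or.inr (Or.inl ⟨h1, reach_trans h2 h'⟩)
        · exact Or.inr (Or.inl ⟨h1, h2'⟩)
        · exact Or.inl (reach_trans h1 h2')
      · rcases ih2 with h' | ⟨h1', h2'⟩ | ⟨h1', h2'⟩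
        · exact Or.inr (Or.inr ⟨h1, reach_trans h2 h'⟩)
        · exact Or.inl (reach_trans h1 h2')
        · exact Or.inr (Or.inr ⟨h1, h2'⟩)
  · intro h
    have hins : G.reach (insert e S) (G.fst e) (G.snd e) :=
      reach_of_mem (Finset.mem_insert_self e S)
    have hmono : ∀ {a b : G.V}, G.reach S a b → G.reach (insert e S) a b :=
      fun h => reach_mono (Finset.subset_insert e S) h
    rcases h with h | ⟨h1, h2⟩ | ⟨h1, h2⟩
    · exact hmono h
    · exact reach_trans (hmono h1) (reach_trans hins (hmono h2))
    · exact reach_trans (hmono h1) (reach_trans (reach_symm hins) (hmono h2))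

end Multigraph
namespace Multigraph

variable {G : Multigraph}

/-- Merge counting lemma: a surjection identifying exactly two points drops the cardinality
by one. -/
lemma card_eq_succ_of_merge {α β : Type} [Finite α] [Finite β] (f : α → β)
    (a b : α) (hab : a ≠ b) (hsurj : Function.Surjective f) (hm : f a = f b)
    (hinj : ∀ x y, f x = f y → x = y ∨ ((x = a ∨ x = b) ∧ (y = a ∨ y = b))) :
    Nat.card α = Nat.card β + 1 := by
  have : Fintype α := Fintype.ofFinite α
  have : Fintype β := Fintype.ofFinite β
  have hbij : Function.Bijective (fun x : {x : α // x ≠ b} => f x.1) := by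
    constructor
    · rintro ⟨x, hx⟩ ⟨y, hy⟩ hxy
      rcases hinj x y hxy with h | ⟨hx', hy'⟩
      · exact Subtype.ext h
      · have hx'' : x = a := hx'.resolve_right hx
        have hy'' : y = a := hy'.resolve_right hy
        exact Subtype.ext (hx''.trans hy''.symm)
    · intro y
      obtain ⟨x, hx⟩ := hsurj y
      by_cases hxb : x = b
      · refine ⟨⟨a, hab⟩, ?_⟩
        show f a = y
        rw [hm, ← hxb, hx]
      · exact ⟨⟨x, hxb⟩, hx⟩
  have h1 : Nat.card β = Nat.card {x : α // x ≠ b} := (Nat.card_congr (Equiv.ofBijective _ hbij)).symm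
  have h2 : Nat.card α = Nat.card {x : α // x ≠ b} + 1 := by
    rw [← Nat.card_congr (Equiv.optionSubtypeNe b)]
    rw [Nat.card_eq_fintype_card, Nat.card_eq_fintype_card, Fintype.card_option]
  omega

lemma comp_eq_iff {S : Finset G.E} {v w : G.V} :
    (Quotient.mk (Relation.EqvGen.setoid (G.step S)) v) = Quotient.mk _ w ↔ G.reach S v w :=
  ⟨Quotient.exact, fun h => Quotient.sound h⟩

lemma ncomp_insert_of_reach {S : Finset G.E} {e : G.E}
    (h : G.reach S (G.fst e) (G.snd e)) : G.ncomp (insert e S) = G.ncomp S := by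
  have hrel : ∀ x y, G.reach (insert e S) x y ↔ G.reach S x y := by
    intro x y
    rw [reach_insert_iff]
    constructor
    · rintro (h' | ⟨h1, h2⟩ | ⟨h1, h2⟩)
      · exact h'
      · exact reach_trans h1 (reach_trans h h2)
      · exact reach_trans h1 (reach_trans (reach_symm h) h2)
    · exact Or.inl
  have hset : Relation.EqvGen.setoid (G.step (insert e S)) = Relation.EqvGen.setoid (G.step S) := by
    apply Setoid.ext
    intro x y
    exact hrel x y
  unfold ncomp
  rw [hset]

lemma ncomp_insert_of_not_reach {S : Finset G.E} {e : G.E}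
    (h : ¬ G.reach S (G.fst e) (G.snd e)) :
    G.ncomp S = G.ncomp (insert e S) + 1 := by
  set sS := Relation.EqvGen.setoid (G.step S)
  set sI := Relation.EqvGen.setoid (G.step (insert e S))
  let f : Quotient sS → Quotient sI :=
    Quotient.lift (fun v => Quotient.mk sI v)
      (fun x y hxy => Quotient.sound (reach_mono (Finset.subset_insert e S) hxy))
  apply card_eq_succ_of_merge f (Quotient.mk sS (G.fst e)) (Quotient.mk sS (G.snd e))
  · intro hc
    exact h (comp_eq_iff.mp hc)
  · intro q
    obtain ⟨v, rfl⟩ := Quotient.exists_rep q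
    exact ⟨Quotient.mk sS v, rfl⟩
  · exact Quotient.sound (reach_of_mem (Finset.mem_insert_self e S))
  · intro x y
    obtain ⟨u, rfl⟩ := Quotient.exists_rep x
    obtain ⟨v, rfl⟩ := Quotient.exists_rep y
    intro hf
    have huv : G.reach (insert e S) u v := Quotient.exact hf
    rw [reach_insert_iff] at huv
    rcases huv with h' | ⟨h1, h2⟩ | ⟨h1, h2⟩
    · exact Or.inl (Quotient.sound h')
    · exact Or.inr ⟨Or.inl (Quotient.sound h1), Or.inr (Quotient.sound (reach_symm h2))⟩
    · exact Or.inr ⟨Or.inr (Quotient.sound h1), Or.inl (Quotient.sound (reach_symm h2))⟩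

lemma ncomp_insert_le (S : Finset G.E) (e : G.E) : G.ncomp (insert e S) ≤ G.ncomp S := by
  by_cases h : G.reach S (G.fst e) (G.snd e)
  · exact (ncomp_insert_of_reach h).le
  · rw [ncomp_insert_of_not_reach h]; omega

lemma ncomp_le_insert_add (S : Finset G.E) (e : G.E) :
    G.ncomp S ≤ G.ncomp (insert e S) + 1 := by
  by_cases h : G.reach S (G.fst e) (G.snd e)
  · rw [ncomp_insert_of_reach h]; omega
  · exact (ncomp_insert_of_not_reach h).le

lemma ncomp_empty : G.ncomp (∅ : Finset G.E) = Fintype.card G.V := by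
  unfold ncomp
  rw [← Nat.card_eq_fintype_card]
  apply Nat.card_congr
  apply Equiv.symm
  apply Equiv.ofBijective (Quotient.mk _)
  constructor
  · intro x y hxy
    exact (eq_of_reach_isolated (fun e he => by simp at he) (comp_eq_iff.mp hxy)).symm
  · intro q
    exact Quotient.exists_rep q

lemma ncomp_pos [Nonempty G.V] (S : Finset G.E) : 0 < G.ncomp S := by
  have : Nonempty (Quotient (Relation.EqvGen.setoid (G.step S))) :=
    Nonempty.map (Quotient.mk _) inferInstance
  exact Nat.card_pos

lemma reach_of_ncomp_one {S : Finset G.E} (h : G.ncomp S = 1) (x y : G.V) : G.reach S x y := by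
  have := (Nat.card_eq_one_iff_unique.mp h).1
  exact comp_eq_iff.mp (this.allEq _ _)

lemma reach_dichotomy {S : Finset G.E} (h2 : G.ncomp S = 2) {x y : G.V}
    (hxy : ¬ G.reach S x y) (v : G.V) : G.reach S v x ∨ G.reach S v y := by
  obtain ⟨p, q, hpq, huniv⟩ := Nat.card_eq_two_iff.mp h2
  have hmem : ∀ c : Quotient (Relation.EqvGen.setoid (G.step S)), c = p ∨ c = q := by
    intro c
    have : c ∈ ({p, q} : Set _) := huniv ▸ Set.mem_univ c
    simpa using this
  have hx := hmem (Quotient.mk _ x)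
  have hy := hmem (Quotient.mk _ y)
  have hv := hmem (Quotient.mk _ v)
  have hne : (Quotient.mk (Relation.EqvGen.setoid (G.step S)) x) ≠ Quotient.mk _ y :=
    fun hc => hxy (comp_eq_iff.mp hc)
  have : (Quotient.mk (Relation.EqvGen.setoid (G.step S)) v) = Quotient.mk _ x ∨
      (Quotient.mk (Relation.EqvGen.setoid (G.step S)) v) = Quotient.mk _ y := by
    rcases hx with hx | hx <;> rcases hy with hy | hy <;> rcases hv with hv | hv <;>
      simp_all
  rcases this with h | h
  · exact Or.inl (comp_eq_iff.mp h)
  · exact Or.inr (comp_eq_iff.mp h)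

end Multigraph
namespace Multigraph

variable {G : Multigraph}

lemma le_ncomp_add_card (S : Finset G.E) : Fintype.card G.V ≤ G.ncomp S + S.card := by
  classical
  induction S using Finset.induction_on with
  | empty => simp [ncomp_empty]
  | @insert e S he ih =>
    have h1 := ncomp_le_insert_add (G := G) S e
    rw [Finset.card_insert_of_notMem he]
    omega

lemma ncomp_le_union_add (S D : Finset G.E) : G.ncomp S ≤ G.ncomp (S ∪ D) + D.card := by
  classical
  induction D using Finset.induction_on with
  | empty => simp
  | @insert d D hd ih =>
    have h1 := ncomp_le_insert_add (G := G) (S ∪ D) d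
    rw [Finset.union_insert, Finset.card_insert_of_notMem hd]
    omega

lemma subset_tree_ncomp {T S : Finset G.E} (hT : G.IsSpanningTree T) (hS : S ⊆ T) :
    G.ncomp S + S.card = Fintype.card G.V := by
  classical
  have h1 := le_ncomp_add_card (G := G) S
  have h2 := ncomp_le_union_add (G := G) S (T \ S)
  rw [Finset.union_sdiff_of_subset hS, Finset.card_sdiff_of_subset hS, hT.1] at h2
  have h3 := Finset.card_le_card hS
  have h4 := hT.2
  omega

lemma forest_of_all_cut {S : Finset G.E}
    (h : ∀ e ∈ S, ¬ G.reach (S.erase e) (G.fst e) (G.snd e)) :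
    G.ncomp S + S.card = Fintype.card G.V := by
  classical
  induction S using Finset.induction_on with
  | empty => simp [ncomp_empty]
  | @insert e S he ih =>
    have hS : ∀ f ∈ S, ¬ G.reach (S.erase f) (G.fst f) (G.snd f) := by
      intro f hf hr
      exact h f (Finset.mem_insert_of_mem hf)
        (reach_mono (Finset.erase_subset_erase _ (Finset.subset_insert e S)) hr)
    have hne : ¬ G.reach S (G.fst e) (G.snd e) := by
      have := h e (Finset.mem_insert_self e S)
      rwa [Finset.erase_insert he] at this
    have h1 := ncomp_insert_of_not_reach hne
    rw [Finset.card_insert_of_notMem he]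
    have h2 := ih hS
    omega

lemma nonempty_of_ncomp_one {S : Finset G.E} (h : G.ncomp S = 1) : Nonempty G.V := by
  have := (Nat.card_eq_one_iff_unique.mp h).2
  obtain ⟨q⟩ := this
  obtain ⟨v, _⟩ := Quotient.exists_rep q
  exact ⟨v⟩

lemma exists_spanning_tree_aux :
    ∀ n (S : Finset G.E), S.card = n → G.ncomp S = 1 → ∃ T ⊆ S, G.IsSpanningTree T := by
  intro n
  induction n using Nat.strong_induction_on with
  | _ n ih =>
    intro S hcard h1
    classical
    by_cases htree : S.card + 1 = Fintype.card G.V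
    · exact ⟨S, Finset.Subset.refl S, h1, htree⟩
    · have hge := le_ncomp_add_card (G := G) S
      rw [h1] at hge
      have hcardV : Fintype.card G.V ≤ S.card := by omega
      have hex : ∃ e ∈ S, G.reach (S.erase e) (G.fst e) (G.snd e) := by
        by_contra hc
        push_neg at hc
        have := forest_of_all_cut hc
        omega
      obtain ⟨e, he, hr⟩ := hex
      have h2 : G.ncomp (S.erase e) = 1 := by
        have := ncomp_insert_of_reach hr
        rw [Finset.insert_erase he, h1] at this
        exact this.symm
      have hlt : (S.erase e).card < n := by
        have hpos : 1 ≤ S.card := Finset.card_pos.mpr ⟨e, he⟩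
        rw [Finset.card_erase_of_mem he]
        omega
      obtain ⟨T, hT1, hT2⟩ := ih _ hlt (S.erase e) rfl h2
      exact ⟨T, hT1.trans (Finset.erase_subset e S), hT2⟩

lemma exists_spanning_tree {S : Finset G.E} (h : G.ncomp S = 1) :
    ∃ T ⊆ S, G.IsSpanningTree T := exists_spanning_tree_aux _ S rfl h

lemma kappa_pos (hG : G.IsConnected) : 0 < G.kappa := by
  obtain ⟨T, _, hT⟩ := exists_spanning_tree (G := G) hG
  have : Nonempty {S : Finset G.E // G.IsSpanningTree S} := ⟨⟨T, hT⟩⟩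
  exact Nat.card_pos

lemma tree_erase_not_reach {T : Finset G.E} {e : G.E} (hT : G.IsSpanningTree T) (he : e ∈ T) :
    ¬ G.reach (T.erase e) (G.fst e) (G.snd e) := by
  intro hr
  have h1 := ncomp_insert_of_reach hr
  rw [Finset.insert_erase he, hT.1] at h1
  have h2 := subset_tree_ncomp hT (Finset.erase_subset e T)
  rw [Finset.card_erase_of_mem he] at h2
  have h3 := hT.2
  have h4 : 0 < T.card := Finset.card_pos.mpr ⟨e, he⟩
  omega

lemma tree_erase_twoforest {T : Finset G.E} {e : G.E} (hT : G.IsSpanningTree T) (he : e ∈ T) :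
    G.IsTwoForest (T.erase e) := by
  have h2 := subset_tree_ncomp hT (Finset.erase_subset e T)
  rw [Finset.card_erase_of_mem he] at h2
  have h3 := hT.2
  have h4 : 1 ≤ T.card := Finset.card_pos.mpr ⟨e, he⟩
  constructor
  · omega
  · rw [Finset.card_erase_of_mem he]; omega

lemma twoforest_not_mem {S : Finset G.E} {e : G.E} (hS : ¬ G.reach S (G.fst e) (G.snd e)) :
    e ∉ S := fun he => hS (reach_of_mem he)

lemma twoforest_insert_tree {S : Finset G.E} {e : G.E} (hS : G.IsTwoForest S)
    (hr : ¬ G.reach S (G.fst e) (G.snd e)) : G.IsSpanningTree (insert e S) := by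
  have hne := twoforest_not_mem hr
  have h1 := ncomp_insert_of_not_reach hr
  rw [hS.1] at h1
  constructor
  · omega
  · rw [Finset.card_insert_of_notMem hne]
    have := hS.2
    omega

end Multigraph
namespace Multigraph

variable {G : Multigraph}

lemma card_subtype_congr {α : Type} [Fintype α] {P Q : α → Prop} (h : ∀ x, P x ↔ Q x) :
    Nat.card {x // P x} = Nat.card {x // Q x} :=
  Nat.card_congr (Equiv.subtypeEquivRight h)

lemma card_subtype_split {α : Type} [Fintype α] (P Q : α → Prop) :
    Nat.card {x // P x} = Nat.card {x // P x ∧ Q x} + Nat.card {x // P x ∧ ¬ Q x} := by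
  classical
  simp only [Nat.card_eq_fintype_card, Fintype.card_subtype]
  rw [← Finset.card_filter_add_card_filter_not (s := Finset.univ.filter P) (p := Q)]
  rw [Finset.filter_filter, Finset.filter_filter]

lemma card_subtype_eq_sum {α : Type} [Fintype α] (P : α → Prop) :
    Nat.card {x // P x} = ∑ x : α, if P x then 1 else 0 := by
  classical
  simp only [Nat.card_eq_fintype_card, Fintype.card_subtype]
  rw [Finset.card_filter]

lemma card_prod_subtype_sum_left {β γ : Type} [Fintype β] [Fintype γ] (P : β → γ → Prop) :
    Nat.card {p : β × γ // P p.1 p.2} = ∑ b : β, Nat.card {c : γ // P b c} := by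
  classical
  rw [card_subtype_eq_sum]
  rw [Fintype.sum_prod_type]
  congr 1
  funext b
  rw [card_subtype_eq_sum]

lemma card_prod_subtype_sum_right {β γ : Type} [Fintype β] [Fintype γ] (P : β → γ → Prop) :
    Nat.card {p : β × γ // P p.1 p.2} = ∑ c : γ, Nat.card {b : β // P b c} := by
  classical
  rw [card_subtype_eq_sum]
  rw [Fintype.sum_prod_type_right]
  congr 1
  funext c
  rw [card_subtype_eq_sum]

lemma kappa2Sep_comm (x y : G.V) : G.kappa2Sep x y = G.kappa2Sep y x := by
  apply card_subtype_congr
  intro S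
  exact and_congr_right fun _ =>
    ⟨fun h h' => h (reach_symm h'), fun h h' => h (reach_symm h')⟩

lemma kappa2Sep_self (x : G.V) : G.kappa2Sep x x = 0 := by
  have : IsEmpty {S : Finset G.E // G.IsTwoForest S ∧ ¬ G.reach S x x} :=
    ⟨fun ⟨S, _, h⟩ => h (reach_refl _ _)⟩
  exact Nat.card_of_isEmpty

lemma kappa2Tog_comm (x y q : G.V) : G.kappa2Tog x y q = G.kappa2Tog y x q := by
  apply card_subtype_congr
  intro S
  constructor
  · rintro ⟨hTF, h1, h2⟩
    exact ⟨hTF, reach_symm h1, fun h => h2 (reach_trans h1 h)⟩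
  · rintro ⟨hTF, h1, h2⟩
    exact ⟨hTF, reach_symm h1, fun h => h2 (reach_trans h1 h)⟩

/-- The endpoint of `e` other than `y`. -/
noncomputable def other (G : Multigraph) (y : G.V) (e : G.E) : G.V :=
  if G.fst e = y then G.snd e else G.fst e

lemma other_spec {y : G.V} {e : G.E} (h : G.fst e = y ∨ G.snd e = y) :
    (G.fst e = y ∧ G.snd e = G.other y e) ∨ (G.snd e = y ∧ G.fst e = G.other y e) := by
  unfold other
  rcases h with h | h
  · rw [if_pos h]; exact Or.inl ⟨h, rfl⟩
  · rw [if_neg (fun hc => G.no_loop e (hc.trans h.symm))]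
    exact Or.inr ⟨h, rfl⟩

lemma other_ne {y : G.V} {e : G.E} (h : G.fst e = y ∨ G.snd e = y) : G.other y e ≠ y := by
  rcases other_spec h with ⟨h1, h2⟩ | ⟨h1, h2⟩
  · rw [← h2, ← h1]; exact fun hc => G.no_loop e hc.symm
  · rw [← h2, ← h1]; exact fun hc => G.no_loop e hc

lemma reach_ends_iff {S : Finset G.E} {y : G.V} {e : G.E} (h : G.fst e = y ∨ G.snd e = y) :
    G.reach S (G.fst e) (G.snd e) ↔ G.reach S y (G.other y e) := by
  rcases other_spec h with ⟨h1, h2⟩ | ⟨h1, h2⟩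
  · rw [h1, h2]
  · rw [h1, h2]
    exact ⟨reach_symm, reach_symm⟩

lemma step_other {S : Finset G.E} {y : G.V} {e : G.E} (he : e ∈ S)
    (h : G.fst e = y ∨ G.snd e = y) : G.reach S y (G.other y e) :=
  (reach_ends_iff h).mp (reach_of_mem he)

end Multigraph
namespace Multigraph

variable {G : Multigraph}

/-- The fundamental bijection: (two-forest, crossing edge) ↔ (spanning tree, tree edge). -/
noncomputable def crossEquiv (ψ : G.E → Finset G.E → Prop) :
    {p : G.E × Finset G.E //
      (G.IsTwoForest p.2 ∧ ¬ G.reach p.2 (G.fst p.1) (G.snd p.1)) ∧ ψ p.1 p.2} ≃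
    {p : G.E × Finset G.E //
      (G.IsSpanningTree p.2 ∧ p.1 ∈ p.2) ∧ ψ p.1 (p.2.erase p.1)} where
  toFun := fun ⟨(e, S), ⟨⟨hTF, hr⟩, hψ⟩⟩ =>
    ⟨(e, insert e S), ⟨twoforest_insert_tree hTF hr, Finset.mem_insert_self e S⟩,
      by rwa [Finset.erase_insert (twoforest_not_mem hr)]⟩
  invFun := fun ⟨(e, T), ⟨⟨hT, he⟩, hψ⟩⟩ =>
    ⟨(e, T.erase e), ⟨tree_erase_twoforest hT he, tree_erase_not_reach hT he⟩, hψ⟩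
  left_inv := by
    rintro ⟨⟨e, S⟩, ⟨⟨hTF, hr⟩, hψ⟩⟩
    apply Subtype.ext
    simp [Finset.erase_insert (twoforest_not_mem hr)]
  right_inv := by
    rintro ⟨⟨e, T⟩, ⟨⟨hT, he⟩, hψ⟩⟩
    apply Subtype.ext
    simp [Finset.insert_erase he]

lemma cross_card (ψ : G.E → Finset G.E → Prop) :
    Nat.card {p : G.E × Finset G.E //
      (G.IsTwoForest p.2 ∧ ¬ G.reach p.2 (G.fst p.1) (G.snd p.1)) ∧ ψ p.1 p.2} =
    Nat.card {p : G.E × Finset G.E //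
      (G.IsSpanningTree p.2 ∧ p.1 ∈ p.2) ∧ ψ p.1 (p.2.erase p.1)} :=
  Nat.card_congr (crossEquiv ψ)

lemma kappa_eq_sum : G.kappa = ∑ S : Finset G.E, if G.IsSpanningTree S then 1 else 0 :=
  card_subtype_eq_sum _

/-- Foster's theorem, combinatorial form. -/
lemma foster : (∑ e : G.E, G.kappa2Sep (G.fst e) (G.snd e)) + G.kappa =
    Fintype.card G.V * G.kappa := by
  classical
  have h1 : ∑ e : G.E, G.kappa2Sep (G.fst e) (G.snd e) =
      Nat.card {p : G.E × Finset G.E //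
        (G.IsTwoForest p.2 ∧ ¬ G.reach p.2 (G.fst p.1) (G.snd p.1)) ∧ True} := by
    rw [card_prod_subtype_sum_left
      (P := fun e S => (G.IsTwoForest S ∧ ¬ G.reach S (G.fst e) (G.snd e)) ∧ True)]
    apply Finset.sum_congr rfl
    intro e _
    exact card_subtype_congr fun S => by tauto
  have h2 := cross_card (G := G) (fun _ _ => True)
  have h3 : Nat.card {p : G.E × Finset G.E //
      (G.IsSpanningTree p.2 ∧ p.1 ∈ p.2) ∧ True} =
      ∑ S : Finset G.E, Nat.card {e : G.E // (G.IsSpanningTree S ∧ e ∈ S) ∧ True} :=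
    card_prod_subtype_sum_right
      (P := fun (e : G.E) (S : Finset G.E) => (G.IsSpanningTree S ∧ e ∈ S) ∧ True)
  have h4 : ∀ S : Finset G.E, Nat.card {e : G.E // (G.IsSpanningTree S ∧ e ∈ S) ∧ True} =
      if G.IsSpanningTree S then S.card else 0 := by
    intro S
    by_cases hT : G.IsSpanningTree S
    · rw [if_pos hT]
      rw [card_subtype_congr (Q := fun e => e ∈ S) (fun e => by tauto)]
      rw [Nat.card_eq_fintype_card]
      exact Fintype.card_coe S
    · rw [if_neg hT]
      have : IsEmpty {e : G.E // (G.IsSpanningTree S ∧ e ∈ S) ∧ True} :=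
        ⟨fun ⟨e, ⟨h, _⟩, _⟩ => hT h⟩
      exact Nat.card_of_isEmpty
  rw [h1, h2, h3]
  rw [Finset.sum_congr rfl (fun S _ => h4 S)]
  rw [kappa_eq_sum, ← Finset.sum_add_distrib]
  rw [Finset.mul_sum]
  apply Finset.sum_congr rfl
  intro S _
  by_cases hT : G.IsSpanningTree S
  · simp only [if_pos hT, mul_one]
    exact hT.2
  · simp [hT]

end Multigraph
namespace Multigraph

variable {G : Multigraph}

/-- Every vertex is either `y` or connected, avoiding all edges at `y`, to the other endpoint
of some edge at `y`. -/
lemma tree_cover {T : Finset G.E} (y : G.V) {v : G.V} (hv : G.reach T v y) :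
    v = y ∨ ∃ e, (e ∈ T ∧ (G.fst e = y ∨ G.snd e = y)) ∧
      G.reach (T.filter (fun f => ¬(G.fst f = y ∨ G.snd f = y))) v (G.other y e) := by
  rw [reach_iff_rtg] at hv
  induction hv using Relation.ReflTransGen.head_induction_on with
  | refl => exact Or.inl rfl
  | head h' _ ih =>
    rename_i a c _
    obtain ⟨f, hfT, hor⟩ := h'
    by_cases hfy : G.fst f = y ∨ G.snd f = y
    · by_cases hay : a = y
      · exact Or.inl hay
      · refine Or.inr ⟨f, ⟨hfT, hfy⟩, ?_⟩
        have hoa : G.other y f = a := by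
          rcases other_spec hfy with ⟨h1, h2⟩ | ⟨h1, h2⟩ <;>
            rcases hor with ⟨h3, h4⟩ | ⟨h3, h4⟩
          · exact absurd (h3 ▸ h1) hay
          · rw [← h2, h4]
          · rw [← h2, h3]
          · exact absurd (h4 ▸ h1) hay
        rw [hoa]
        exact reach_refl _ _
    · have hstep : G.step (T.filter (fun f => ¬(G.fst f = y ∨ G.snd f = y))) a c :=
        ⟨f, Finset.mem_filter.mpr ⟨hfT, hfy⟩, hor⟩
      rcases ih with rfl | ⟨e, he, hre⟩
      · exfalso
        apply hfy
        rcases hor with ⟨h3, h4⟩ | ⟨h3, h4⟩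
        · exact Or.inr h4
        · exact Or.inl h3
      · exact Or.inr ⟨e, he, reach_trans (reach_of_step hstep) hre⟩

lemma tree_sep_exists_unique {T : Finset G.E} (hT : G.IsSpanningTree T) {y z : G.V}
    (hz : z ≠ y) :
    ∃! e : G.E, (e ∈ T ∧ (G.fst e = y ∨ G.snd e = y)) ∧ ¬ G.reach (T.erase e) y z := by
  classical
  set S0 := T.filter (fun f => ¬(G.fst f = y ∨ G.snd f = y)) with hS0
  set I := T.filter (fun f => (G.fst f = y ∨ G.snd f = y)) with hI
  have hS0sub : ∀ {e : G.E}, (G.fst e = y ∨ G.snd e = y) → S0 ⊆ T.erase e := by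
    intro e he f hf
    rw [Finset.mem_filter] at hf
    refine Finset.mem_erase.mpr ⟨fun hc => hf.2 (hc ▸ he), hf.1⟩
  -- the map Φ
  set Q := Quotient (Relation.EqvGen.setoid (G.step S0)) with hQ
  set X := {e : G.E // e ∈ T ∧ (G.fst e = y ∨ G.snd e = y)} with hX
  set Phi : Option X → Q := fun o => match o with
    | none => Quotient.mk _ y
    | some e => Quotient.mk _ (G.other y e.1) with hPhi
  have hsurj : Function.Surjective Phi := by
    intro q
    obtain ⟨v, rfl⟩ := Quotient.exists_rep q
    have hvy : G.reach T v y := reach_symm (reach_of_ncomp_one hT.1 y v)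
    rcases tree_cover y hvy with rfl | ⟨e, he, hre⟩
    · exact ⟨none, rfl⟩
    · exact ⟨some ⟨e, he⟩, (comp_eq_iff.mpr (reach_symm hre))⟩
  -- cardinalities
  have hfintQ : Fintype Q := Fintype.ofFinite Q
  have hcards : Nat.card (Option X) = Nat.card Q := by
    have hsplit := Finset.card_filter_add_card_filter_not
      (s := T) (p := fun f => (G.fst f = y ∨ G.snd f = y))
    have hsub := subset_tree_ncomp hT (Finset.filter_subset
      (fun f => ¬(G.fst f = y ∨ G.snd f = y)) T)
    have hTcard := hT.2
    rw [← hS0] at hsub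
    rw [← hI, ← hS0] at hsplit
    have hXcard : Nat.card X = I.card := by
      have hx2 : Nat.card X = Nat.card {e : G.E // e ∈ I} :=
        card_subtype_congr (fun e => by rw [hI, Finset.mem_filter])
      rw [hx2, Nat.card_eq_fintype_card]
      exact Fintype.card_coe _
    have hQcard : Nat.card Q = G.ncomp S0 := rfl
    rw [Nat.card_eq_fintype_card, Fintype.card_option, ← Nat.card_eq_fintype_card, hXcard,
      hQcard]
    omega
  have hbij : Function.Bijective Phi := by
    have : Fintype (Option X) := inferInstance
    rw [Fintype.bijective_iff_surjective_and_card]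
    exact ⟨hsurj, by rw [← Nat.card_eq_fintype_card, ← Nat.card_eq_fintype_card, hcards]⟩
  -- characterization of separation
  have hchar : ∀ e : G.E, e ∈ T → (G.fst e = y ∨ G.snd e = y) →
      (¬ G.reach (T.erase e) y z ↔ G.reach S0 z (G.other y e)) := by
    intro e heT hey
    constructor
    · intro hsep
      have hvy : G.reach T z y := reach_symm (reach_of_ncomp_one hT.1 y z)
      rcases tree_cover y hvy with rfl | ⟨e', ⟨he'T, he'y⟩, hre⟩
      · exact absurd rfl hz
      · by_cases hee : e' = e
        · rwa [hee] at hre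
        · exfalso
          apply hsep
          have h1 : G.reach (T.erase e) y (G.other y e') :=
            step_other (Finset.mem_erase.mpr ⟨hee, he'T⟩) he'y
          have h2 : G.reach (T.erase e) (G.other y e') z :=
            reach_symm (reach_mono (hS0sub hey) hre)
          exact reach_trans h1 h2
    · intro hzo hyz
      have h1 : G.reach (T.erase e) y (G.other y e) :=
        reach_trans hyz (reach_mono (hS0sub hey) hzo)
      exact (tree_erase_not_reach hT heT) ((reach_ends_iff hey).mpr h1)
  -- assemble
  have hvy : G.reach T z y := reach_symm (reach_of_ncomp_one hT.1 y z)
  rcases tree_cover y hvy with rfl | ⟨e, ⟨heT, hey⟩, hre⟩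
  · exact absurd rfl hz
  · refine ⟨e, ⟨⟨heT, hey⟩, (hchar e heT hey).mpr hre⟩, ?_⟩
    rintro e' ⟨⟨he'T, he'y⟩, hsep'⟩
    have hre' := (hchar e' he'T he'y).mp hsep'
    have heq : Phi (some ⟨e', he'T, he'y⟩) = Phi (some ⟨e, heT, hey⟩) :=
      comp_eq_iff.mpr (reach_trans (reach_symm hre') hre)
    have h2 := hbij.1 (a₁ := some ⟨e', he'T, he'y⟩) (a₂ := some ⟨e, heT, hey⟩) heq
    exact congrArg Subtype.val (Option.some.inj h2)
end Multigraph
namespace Multigraph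

variable {G : Multigraph}

lemma tree_sep_count {T : Finset G.E} (hT : G.IsSpanningTree T) (y v : G.V) :
    Nat.card {e : G.E // (e ∈ T ∧ (G.fst e = y ∨ G.snd e = y)) ∧
      ¬ G.reach (T.erase e) y v} = if v = y then 0 else 1 := by
  by_cases hv : v = y
  · rw [if_pos hv]
    have : IsEmpty {e : G.E // (e ∈ T ∧ (G.fst e = y ∨ G.snd e = y)) ∧
        ¬ G.reach (T.erase e) y v} :=
      ⟨fun ⟨e, _, h⟩ => h (by rw [hv]; exact reach_refl _ _)⟩
    exact Nat.card_of_isEmpty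
  · rw [if_neg hv]
    obtain ⟨e, he, hu⟩ := tree_sep_exists_unique hT (z := v) hv
    rw [Nat.card_eq_one_iff_unique]
    constructor
    · exact ⟨fun a b => Subtype.ext ((hu a.1 a.2).trans (hu b.1 b.2).symm)⟩
    · exact ⟨⟨e, he⟩⟩

lemma reach_other_iff {T : Finset G.E} (hT : G.IsSpanningTree T) {e : G.E} (heT : e ∈ T)
    (hey : G.fst e = y ∨ G.snd e = y) (v : G.V) :
    G.reach (T.erase e) (G.other y e) v ↔ ¬ G.reach (T.erase e) y v := by
  have hsep : ¬ G.reach (T.erase e) y (G.other y e) :=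
    fun hc => tree_erase_not_reach hT heT ((reach_ends_iff hey).mpr hc)
  constructor
  · intro h1 h2
    exact hsep (reach_trans h2 (reach_symm h1))
  · intro h1
    have := reach_dichotomy (tree_erase_twoforest hT heT).1 hsep v
    rcases this with h | h
    · exact absurd (reach_symm h) h1
    · exact reach_symm h

lemma tree_signed_count {T : Finset G.E} (hT : G.IsSpanningTree T) (y z q : G.V) :
    Nat.card {e : G.E // (e ∈ T ∧ (G.fst e = y ∨ G.snd e = y)) ∧
        (G.reach (T.erase e) y z ∧ ¬ G.reach (T.erase e) y q)} +
      (if q = y then 1 else 0) =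
    Nat.card {e : G.E // (e ∈ T ∧ (G.fst e = y ∨ G.snd e = y)) ∧
        (G.reach (T.erase e) (G.other y e) z ∧ ¬ G.reach (T.erase e) (G.other y e) q)} +
      (if z = y then 1 else 0) := by
  classical
  -- rewrite the second count via the opposite side
  have hc2 : Nat.card {e : G.E // (e ∈ T ∧ (G.fst e = y ∨ G.snd e = y)) ∧
      (G.reach (T.erase e) (G.other y e) z ∧ ¬ G.reach (T.erase e) (G.other y e) q)} =
      Nat.card {e : G.E // ((e ∈ T ∧ (G.fst e = y ∨ G.snd e = y)) ∧ ¬ G.reach (T.erase e) y z) ∧ G.reach (T.erase e) y q} := by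
    apply card_subtype_congr
    intro e
    constructor
    · rintro ⟨hb, h1, h2⟩
      exact ⟨⟨hb, (reach_other_iff hT hb.1 hb.2 z).mp h1⟩,
        not_not.mp ((not_congr (reach_other_iff hT hb.1 hb.2 q)).mp h2)⟩
    · rintro ⟨⟨hb, h1⟩, h2⟩
      exact ⟨hb, (reach_other_iff hT hb.1 hb.2 z).mpr h1,
        (not_congr (reach_other_iff hT hb.1 hb.2 q)).mpr (not_not.mpr h2)⟩
  have hc1 : Nat.card {e : G.E // (e ∈ T ∧ (G.fst e = y ∨ G.snd e = y)) ∧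
      (G.reach (T.erase e) y z ∧ ¬ G.reach (T.erase e) y q)} =
      Nat.card {e : G.E // ((e ∈ T ∧ (G.fst e = y ∨ G.snd e = y)) ∧ ¬ G.reach (T.erase e) y q) ∧ G.reach (T.erase e) y z} :=
    card_subtype_congr fun e => by tauto
  have hNq := card_subtype_split (fun e : G.E => (e ∈ T ∧ (G.fst e = y ∨ G.snd e = y)) ∧ ¬ G.reach (T.erase e) y q)
    (fun e => G.reach (T.erase e) y z)
  have hNz := card_subtype_split (fun e : G.E => (e ∈ T ∧ (G.fst e = y ∨ G.snd e = y)) ∧ ¬ G.reach (T.erase e) y z)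
    (fun e => G.reach (T.erase e) y q)
  have hD : Nat.card {e : G.E // ((e ∈ T ∧ (G.fst e = y ∨ G.snd e = y)) ∧ ¬ G.reach (T.erase e) y q) ∧
      ¬ G.reach (T.erase e) y z} =
      Nat.card {e : G.E // ((e ∈ T ∧ (G.fst e = y ∨ G.snd e = y)) ∧ ¬ G.reach (T.erase e) y z) ∧
      ¬ G.reach (T.erase e) y q} := card_subtype_congr fun e => by tauto
  have hq := tree_sep_count hT y q
  have hz := tree_sep_count hT y z
  rw [hc1, hc2]
  by_cases hqy : q = y
  · by_cases hzy : z = y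
    · rw [if_pos hqy] at hq
      rw [if_pos hzy] at hz
      rw [if_pos hqy, if_pos hzy]
      omega
    · rw [if_pos hqy] at hq
      rw [if_neg hzy] at hz
      rw [if_pos hqy, if_neg hzy]
      omega
  · by_cases hzy : z = y
    · rw [if_neg hqy] at hq
      rw [if_pos hzy] at hz
      rw [if_neg hqy, if_pos hzy]
      omega
    · rw [if_neg hqy] at hq
      rw [if_neg hzy] at hz
      rw [if_neg hqy, if_neg hzy]
      omega
end Multigraph
namespace Multigraph

variable {G : Multigraph}

lemma lap_apply_sum (y : G.V) (f : G.V → ℝ) :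
    ∑ w : G.V, G.lap y w * f w =
      ∑ e : G.E, (if G.fst e = y ∨ G.snd e = y then f y - f (G.other y e) else 0) := by
  classical
  unfold lap
  have hexp : ∀ w : G.V,
      ((if y = w then (Nat.card {e : G.E // G.fst e = y ∨ G.snd e = y} : ℝ) else 0) -
        (Nat.card {e : G.E // (G.fst e = y ∧ G.snd e = w) ∨ (G.fst e = w ∧ G.snd e = y)} : ℝ)) * f w
      = (if y = w then (Nat.card {e : G.E // G.fst e = y ∨ G.snd e = y} : ℝ) * f w else 0) -
        (Nat.card {e : G.E // (G.fst e = y ∧ G.snd e = w) ∨ (G.fst e = w ∧ G.snd e = y)} : ℝ) * f w := by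
    intro w
    split_ifs <;> ring
  rw [Finset.sum_congr rfl (fun w _ => hexp w)]
  rw [Finset.sum_sub_distrib]
  have h1 : ∑ w : G.V, (if y = w then (Nat.card {e : G.E // G.fst e = y ∨ G.snd e = y} : ℝ) * f w else 0)
      = ∑ e : G.E, (if G.fst e = y ∨ G.snd e = y then f y else 0) := by
    rw [Finset.sum_ite_eq Finset.univ y
      (fun w => (Nat.card {e : G.E // G.fst e = y ∨ G.snd e = y} : ℝ) * f w)]
    rw [if_pos (Finset.mem_univ y)]
    rw [card_subtype_eq_sum (fun e : G.E => G.fst e = y ∨ G.snd e = y)]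
    push_cast
    rw [Finset.sum_mul]
    apply Finset.sum_congr rfl
    intro e _
    split_ifs <;> ring
  have h2 : ∀ w : G.V,
      (Nat.card {e : G.E // (G.fst e = y ∧ G.snd e = w) ∨ (G.fst e = w ∧ G.snd e = y)} : ℝ) * f w
      = ∑ e : G.E, (if (G.fst e = y ∧ G.snd e = w) ∨ (G.fst e = w ∧ G.snd e = y) then f w else 0) := by
    intro w
    rw [card_subtype_eq_sum (fun e : G.E => (G.fst e = y ∧ G.snd e = w) ∨ (G.fst e = w ∧ G.snd e = y))]
    push_cast
    rw [Finset.sum_mul]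
    apply Finset.sum_congr rfl
    intro e _
    split_ifs <;> ring
  rw [Finset.sum_congr rfl (fun w _ => h2 w)]
  rw [Finset.sum_comm]
  have h3 : ∀ e : G.E,
      ∑ w : G.V, (if (G.fst e = y ∧ G.snd e = w) ∨ (G.fst e = w ∧ G.snd e = y) then f w else 0)
      = (if G.fst e = y ∨ G.snd e = y then f (G.other y e) else 0) := by
    intro e
    by_cases hinc : G.fst e = y ∨ G.snd e = y
    · rw [if_pos hinc]
      rcases other_spec hinc with ⟨hh1, hh2⟩ | ⟨hh1, hh2⟩
      · have hcond : ∀ w : G.V,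
            ((G.fst e = y ∧ G.snd e = w) ∨ (G.fst e = w ∧ G.snd e = y)) ↔ w = G.other y e := by
          intro w
          constructor
          · rintro (⟨ha, hb⟩ | ⟨ha, hb⟩)
            · rw [← hb]; exact hh2
            · exact absurd (hh1.trans hb.symm) (G.no_loop e)
          · rintro rfl
            exact Or.inl ⟨hh1, hh2⟩
        calc ∑ w : G.V, (if (G.fst e = y ∧ G.snd e = w) ∨ (G.fst e = w ∧ G.snd e = y) then f w else 0)
            = ∑ w : G.V, (if w = G.other y e then f w else 0) :=
              Finset.sum_congr rfl (fun w _ => by simp only [hcond w])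
          _ = f (G.other y e) := by
              rw [Finset.sum_ite_eq' Finset.univ (G.other y e) f, if_pos (Finset.mem_univ _)]
      · have hcond : ∀ w : G.V,
            ((G.fst e = y ∧ G.snd e = w) ∨ (G.fst e = w ∧ G.snd e = y)) ↔ w = G.other y e := by
          intro w
          constructor
          · rintro (⟨ha, hb⟩ | ⟨ha, hb⟩)
            · exact absurd (ha.trans hh1.symm) (G.no_loop e)
            · rw [← ha]; exact hh2
          · rintro rfl
            exact Or.inr ⟨hh2, hh1⟩
        calc ∑ w : G.V, (if (G.fst e = y ∧ G.snd e = w) ∨ (G.fst e = w ∧ G.snd e = y) then f w else 0)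
            = ∑ w : G.V, (if w = G.other y e then f w else 0) :=
              Finset.sum_congr rfl (fun w _ => by simp only [hcond w])
          _ = f (G.other y e) := by
              rw [Finset.sum_ite_eq' Finset.univ (G.other y e) f, if_pos (Finset.mem_univ _)]
    · rw [if_neg hinc]
      apply Finset.sum_eq_zero
      intro w _
      rw [if_neg]
      rintro (⟨ha, _⟩ | ⟨_, hb⟩)
      · exact hinc (Or.inl ha)
      · exact hinc (Or.inr hb)
  rw [Finset.sum_congr rfl (fun e _ => h3 e)]
  rw [h1]
  rw [← Finset.sum_sub_distrib]
  apply Finset.sum_congr rfl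
  intro e _
  split_ifs <;> ring

lemma lap_row_sum (y : G.V) : ∑ w : G.V, G.lap y w = 0 := by
  have h := lap_apply_sum (G := G) y (fun _ => 1)
  simp only [mul_one, sub_self, ite_self, Finset.sum_const_zero] at h
  exact h

end Multigraph
namespace Multigraph

variable {G : Multigraph}

lemma tog_balance (y z q : G.V) :
    Nat.card {p : G.E × Finset G.E // (G.fst p.1 = y ∨ G.snd p.1 = y) ∧ G.IsTwoForest p.2 ∧
        G.reach p.2 y z ∧ ¬ G.reach p.2 y q} +
      (if q = y then 1 else 0) * G.kappa =
    Nat.card {p : G.E × Finset G.E // (G.fst p.1 = y ∨ G.snd p.1 = y) ∧ G.IsTwoForest p.2 ∧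
        G.reach p.2 (G.other y p.1) z ∧ ¬ G.reach p.2 (G.other y p.1) q} +
      (if z = y then 1 else 0) * G.kappa := by
  classical
  -- split by whether the edge crosses the two-forest
  have hsplit1 := card_subtype_split
    (fun p : G.E × Finset G.E => (G.fst p.1 = y ∨ G.snd p.1 = y) ∧ G.IsTwoForest p.2 ∧
      G.reach p.2 y z ∧ ¬ G.reach p.2 y q)
    (fun p => G.reach p.2 (G.fst p.1) (G.snd p.1))
  have hsplit2 := card_subtype_split
    (fun p : G.E × Finset G.E => (G.fst p.1 = y ∨ G.snd p.1 = y) ∧ G.IsTwoForest p.2 ∧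
      G.reach p.2 (G.other y p.1) z ∧ ¬ G.reach p.2 (G.other y p.1) q)
    (fun p => G.reach p.2 (G.fst p.1) (G.snd p.1))
  -- non-crossing parts agree
  have hnc : Nat.card {p : G.E × Finset G.E //
      ((G.fst p.1 = y ∨ G.snd p.1 = y) ∧ G.IsTwoForest p.2 ∧
        G.reach p.2 y z ∧ ¬ G.reach p.2 y q) ∧ G.reach p.2 (G.fst p.1) (G.snd p.1)} =
      Nat.card {p : G.E × Finset G.E //
      ((G.fst p.1 = y ∨ G.snd p.1 = y) ∧ G.IsTwoForest p.2 ∧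
        G.reach p.2 (G.other y p.1) z ∧ ¬ G.reach p.2 (G.other y p.1) q) ∧
        G.reach p.2 (G.fst p.1) (G.snd p.1)} := by
    apply card_subtype_congr
    rintro ⟨e, S⟩
    constructor
    · rintro ⟨⟨hinc, hTF, h1, h2⟩, hr⟩
      have hyo : G.reach S y (G.other y e) := (reach_ends_iff hinc).mp hr
      exact ⟨⟨hinc, hTF, reach_trans (reach_symm hyo) h1,
        fun hc => h2 (reach_trans hyo hc)⟩, hr⟩
    · rintro ⟨⟨hinc, hTF, h1, h2⟩, hr⟩
      have hyo : G.reach S y (G.other y e) := (reach_ends_iff hinc).mp hr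
      exact ⟨⟨hinc, hTF, reach_trans hyo h1,
        fun hc => h2 (reach_trans (reach_symm hyo) hc)⟩, hr⟩
  -- crossing parts via the tree bijection
  have hx1 : Nat.card {p : G.E × Finset G.E //
      ((G.fst p.1 = y ∨ G.snd p.1 = y) ∧ G.IsTwoForest p.2 ∧
        G.reach p.2 y z ∧ ¬ G.reach p.2 y q) ∧ ¬ G.reach p.2 (G.fst p.1) (G.snd p.1)} =
      Nat.card {p : G.E × Finset G.E //
      (G.IsSpanningTree p.2 ∧ p.1 ∈ p.2) ∧ ((G.fst p.1 = y ∨ G.snd p.1 = y) ∧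
        G.reach (p.2.erase p.1) y z ∧ ¬ G.reach (p.2.erase p.1) y q)} := by
    rw [← cross_card (G := G) (fun e S => (G.fst e = y ∨ G.snd e = y) ∧
      G.reach S y z ∧ ¬ G.reach S y q)]
    exact card_subtype_congr fun p => by tauto
  have hx2 : Nat.card {p : G.E × Finset G.E //
      ((G.fst p.1 = y ∨ G.snd p.1 = y) ∧ G.IsTwoForest p.2 ∧
        G.reach p.2 (G.other y p.1) z ∧ ¬ G.reach p.2 (G.other y p.1) q) ∧
        ¬ G.reach p.2 (G.fst p.1) (G.snd p.1)} =
      Nat.card {p : G.E × Finset G.E //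
      (G.IsSpanningTree p.2 ∧ p.1 ∈ p.2) ∧ ((G.fst p.1 = y ∨ G.snd p.1 = y) ∧
        G.reach (p.2.erase p.1) (G.other y p.1) z ∧
          ¬ G.reach (p.2.erase p.1) (G.other y p.1) q)} := by
    rw [← cross_card (G := G) (fun e S => (G.fst e = y ∨ G.snd e = y) ∧
      G.reach S (G.other y e) z ∧ ¬ G.reach S (G.other y e) q)]
    exact card_subtype_congr fun p => by tauto
  -- tree-side counts, summed per tree
  have ht1 : Nat.card {p : G.E × Finset G.E //
      (G.IsSpanningTree p.2 ∧ p.1 ∈ p.2) ∧ ((G.fst p.1 = y ∨ G.snd p.1 = y) ∧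
        G.reach (p.2.erase p.1) y z ∧ ¬ G.reach (p.2.erase p.1) y q)} =
      ∑ T : Finset G.E, (if G.IsSpanningTree T then
        Nat.card {e : G.E // (e ∈ T ∧ (G.fst e = y ∨ G.snd e = y)) ∧
          (G.reach (T.erase e) y z ∧ ¬ G.reach (T.erase e) y q)} else 0) := by
    rw [card_prod_subtype_sum_right (P := fun (e : G.E) (T : Finset G.E) =>
      (G.IsSpanningTree T ∧ e ∈ T) ∧ ((G.fst e = y ∨ G.snd e = y) ∧
        G.reach (T.erase e) y z ∧ ¬ G.reach (T.erase e) y q))]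
    apply Finset.sum_congr rfl
    intro T _
    by_cases hT : G.IsSpanningTree T
    · rw [if_pos hT]
      exact card_subtype_congr fun e => by tauto
    · rw [if_neg hT]
      have : IsEmpty {e : G.E // (G.IsSpanningTree T ∧ e ∈ T) ∧ ((G.fst e = y ∨ G.snd e = y) ∧
          G.reach (T.erase e) y z ∧ ¬ G.reach (T.erase e) y q)} :=
        ⟨fun ⟨e, ⟨h, _⟩, _⟩ => hT h⟩
      exact Nat.card_of_isEmpty
  have ht2 : Nat.card {p : G.E × Finset G.E //
      (G.IsSpanningTree p.2 ∧ p.1 ∈ p.2) ∧ ((G.fst p.1 = y ∨ G.snd p.1 = y) ∧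
        G.reach (p.2.erase p.1) (G.other y p.1) z ∧
          ¬ G.reach (p.2.erase p.1) (G.other y p.1) q)} =
      ∑ T : Finset G.E, (if G.IsSpanningTree T then
        Nat.card {e : G.E // (e ∈ T ∧ (G.fst e = y ∨ G.snd e = y)) ∧
          (G.reach (T.erase e) (G.other y e) z ∧ ¬ G.reach (T.erase e) (G.other y e) q)}
        else 0) := by
    rw [card_prod_subtype_sum_right (P := fun (e : G.E) (T : Finset G.E) =>
      (G.IsSpanningTree T ∧ e ∈ T) ∧ ((G.fst e = y ∨ G.snd e = y) ∧
        G.reach (T.erase e) (G.other y e) z ∧ ¬ G.reach (T.erase e) (G.other y e) q))]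
    apply Finset.sum_congr rfl
    intro T _
    by_cases hT : G.IsSpanningTree T
    · rw [if_pos hT]
      exact card_subtype_congr fun e => by tauto
    · rw [if_neg hT]
      have : IsEmpty {e : G.E // (G.IsSpanningTree T ∧ e ∈ T) ∧ ((G.fst e = y ∨ G.snd e = y) ∧
          G.reach (T.erase e) (G.other y e) z ∧ ¬ G.reach (T.erase e) (G.other y e) q)} :=
        ⟨fun ⟨e, ⟨h, _⟩, _⟩ => hT h⟩
      exact Nat.card_of_isEmpty
  -- per-tree balance, summed
  have hper : ∀ T : Finset G.E,
      (if G.IsSpanningTree T then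
        Nat.card {e : G.E // (e ∈ T ∧ (G.fst e = y ∨ G.snd e = y)) ∧
          (G.reach (T.erase e) y z ∧ ¬ G.reach (T.erase e) y q)} else 0) +
        (if q = y then 1 else 0) * (if G.IsSpanningTree T then 1 else 0) =
      (if G.IsSpanningTree T then
        Nat.card {e : G.E // (e ∈ T ∧ (G.fst e = y ∨ G.snd e = y)) ∧
          (G.reach (T.erase e) (G.other y e) z ∧ ¬ G.reach (T.erase e) (G.other y e) q)}
        else 0) +
        (if z = y then 1 else 0) * (if G.IsSpanningTree T then 1 else 0) := by
    intro T
    by_cases hT : G.IsSpanningTree T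
    · simp only [if_pos hT, mul_one]
      have := tree_signed_count hT y z q
      omega
    · simp only [if_neg hT, mul_zero]
  have hsum := Finset.sum_congr rfl (fun T (_ : T ∈ Finset.univ) => hper T)
  rw [Finset.sum_add_distrib, Finset.sum_add_distrib, ← Finset.mul_sum, ← Finset.mul_sum,
    ← kappa_eq_sum] at hsum
  rw [← ht1, ← ht2] at hsum
  omega
end Multigraph
namespace Multigraph

variable {G : Multigraph}

/-- Splitting two-forests separating `x` from `q` by the location of `y`. -/
lemma sep_split (x y q : G.V) :
    G.kappa2Sep x q = G.kappa2Tog x y q + G.kappa2Tog y q x := by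
  classical
  have h := card_subtype_split
    (fun S : Finset G.E => G.IsTwoForest S ∧ ¬ G.reach S x q)
    (fun S : Finset G.E => G.reach S x y)
  have h1 : Nat.card {S : Finset G.E // (G.IsTwoForest S ∧ ¬ G.reach S x q) ∧ G.reach S x y} =
      G.kappa2Tog x y q := card_subtype_congr fun S => by tauto
  have h2 : Nat.card {S : Finset G.E // (G.IsTwoForest S ∧ ¬ G.reach S x q) ∧ ¬ G.reach S x y} =
      G.kappa2Tog y q x := by
    apply card_subtype_congr
    intro S
    constructor
    · rintro ⟨⟨hTF, hxq⟩, hxy⟩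
      rcases reach_dichotomy hTF.1 hxq y with h' | h'
      · exact absurd (reach_symm h') hxy
      · exact ⟨hTF, h', fun hc => hxy (reach_symm hc)⟩
    · rintro ⟨hTF, hyq, hyx⟩
      refine ⟨⟨hTF, fun hc => hyx ?_⟩, fun hc => hyx (reach_symm hc)⟩
      exact reach_trans hyq (reach_symm hc)
  rw [← h1, ← h2]
  exact h

lemma sep_tog (x y q : G.V) :
    G.kappa2Sep x q + G.kappa2Sep y q = 2 * G.kappa2Tog x y q + G.kappa2Sep x y := by
  have e1 := sep_split (G := G) x y q
  have e2 := sep_split (G := G) y x q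
  have e3 := sep_split (G := G) x q y
  have c1 := kappa2Tog_comm (G := G) y x q
  have c2 := kappa2Tog_comm (G := G) q y x
  omega

lemma lap_dot_tog (y z q : G.V) :
    ∑ w : G.V, G.lap y w * (G.kappa2Tog w z q : ℝ) =
      (G.kappa : ℝ) * ((if z = y then 1 else 0) - (if q = y then 1 else 0)) := by
  classical
  rw [lap_apply_sum y (fun w => (G.kappa2Tog w z q : ℝ))]
  have hsub : ∀ e : G.E, (if G.fst e = y ∨ G.snd e = y then
        (G.kappa2Tog y z q : ℝ) - (G.kappa2Tog (G.other y e) z q : ℝ) else 0) =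
      (if G.fst e = y ∨ G.snd e = y then (G.kappa2Tog y z q : ℝ) else 0) -
      (if G.fst e = y ∨ G.snd e = y then (G.kappa2Tog (G.other y e) z q : ℝ) else 0) := by
    intro e; split_ifs <;> ring
  rw [Finset.sum_congr rfl (fun e _ => hsub e), Finset.sum_sub_distrib]
  have hN1 : ∑ e : G.E, (if G.fst e = y ∨ G.snd e = y then (G.kappa2Tog y z q : ℝ) else 0)
      = (Nat.card {p : G.E × Finset G.E // (G.fst p.1 = y ∨ G.snd p.1 = y) ∧
          G.IsTwoForest p.2 ∧ G.reach p.2 y z ∧ ¬ G.reach p.2 y q} : ℝ) := by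
    rw [card_prod_subtype_sum_left (P := fun (e : G.E) (S : Finset G.E) =>
      (G.fst e = y ∨ G.snd e = y) ∧ G.IsTwoForest S ∧ G.reach S y z ∧ ¬ G.reach S y q)]
    push_cast
    apply Finset.sum_congr rfl
    intro e _
    by_cases hinc : G.fst e = y ∨ G.snd e = y
    · rw [if_pos hinc]
      have : Nat.card {S : Finset G.E // (G.fst e = y ∨ G.snd e = y) ∧
          G.IsTwoForest S ∧ G.reach S y z ∧ ¬ G.reach S y q} = G.kappa2Tog y z q :=
        card_subtype_congr fun S => by tauto
      rw [this]
    · rw [if_neg hinc]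
      have : IsEmpty {S : Finset G.E // (G.fst e = y ∨ G.snd e = y) ∧
          G.IsTwoForest S ∧ G.reach S y z ∧ ¬ G.reach S y q} :=
        ⟨fun ⟨S, h, _⟩ => hinc h⟩
      rw [Nat.card_of_isEmpty (α := {S : Finset G.E // (G.fst e = y ∨ G.snd e = y) ∧
          G.IsTwoForest S ∧ G.reach S y z ∧ ¬ G.reach S y q})]
      norm_num
  have hN2 : ∑ e : G.E, (if G.fst e = y ∨ G.snd e = y then
        (G.kappa2Tog (G.other y e) z q : ℝ) else 0)
      = (Nat.card {p : G.E × Finset G.E // (G.fst p.1 = y ∨ G.snd p.1 = y) ∧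
          G.IsTwoForest p.2 ∧ G.reach p.2 (G.other y p.1) z ∧
            ¬ G.reach p.2 (G.other y p.1) q} : ℝ) := by
    rw [card_prod_subtype_sum_left (P := fun (e : G.E) (S : Finset G.E) =>
      (G.fst e = y ∨ G.snd e = y) ∧ G.IsTwoForest S ∧ G.reach S (G.other y e) z ∧
        ¬ G.reach S (G.other y e) q)]
    push_cast
    apply Finset.sum_congr rfl
    intro e _
    by_cases hinc : G.fst e = y ∨ G.snd e = y
    · rw [if_pos hinc]
      have : Nat.card {S : Finset G.E // (G.fst e = y ∨ G.snd e = y) ∧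
          G.IsTwoForest S ∧ G.reach S (G.other y e) z ∧ ¬ G.reach S (G.other y e) q} =
          G.kappa2Tog (G.other y e) z q :=
        card_subtype_congr fun S => by tauto
      rw [this]
    · rw [if_neg hinc]
      have : IsEmpty {S : Finset G.E // (G.fst e = y ∨ G.snd e = y) ∧
          G.IsTwoForest S ∧ G.reach S (G.other y e) z ∧ ¬ G.reach S (G.other y e) q} :=
        ⟨fun ⟨S, h, _⟩ => hinc h⟩
      rw [Nat.card_of_isEmpty (α := {S : Finset G.E // (G.fst e = y ∨ G.snd e = y) ∧
          G.IsTwoForest S ∧ G.reach S (G.other y e) z ∧ ¬ G.reach S (G.other y e) q})]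
      norm_num
  rw [hN1, hN2]
  have hbal := tog_balance (G := G) y z q
  have hcast : (Nat.card {p : G.E × Finset G.E // (G.fst p.1 = y ∨ G.snd p.1 = y) ∧
      G.IsTwoForest p.2 ∧ G.reach p.2 y z ∧ ¬ G.reach p.2 y q} : ℝ) +
      (if q = y then 1 else 0) * (G.kappa : ℝ) =
      (Nat.card {p : G.E × Finset G.E // (G.fst p.1 = y ∨ G.snd p.1 = y) ∧
      G.IsTwoForest p.2 ∧ G.reach p.2 (G.other y p.1) z ∧
        ¬ G.reach p.2 (G.other y p.1) q} : ℝ) +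
      (if z = y then 1 else 0) * (G.kappa : ℝ) := by
    exact_mod_cast congrArg (Nat.cast (R := ℝ)) hbal
  split_ifs at hcast ⊢ <;> linarith

lemma sep_other {y : G.V} {e : G.E} (hinc : G.fst e = y ∨ G.snd e = y) :
    G.kappa2Sep (G.other y e) y = G.kappa2Sep (G.fst e) (G.snd e) := by
  rcases other_spec hinc with ⟨h1, h2⟩ | ⟨h1, h2⟩
  · rw [← h2, ← h1]
    exact kappa2Sep_comm _ _
  · rw [← h2, ← h1]

lemma lap_dot_sep (y z : G.V) :
    ∑ w : G.V, G.lap y w * (G.kappa2Sep w z : ℝ) =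
      2 * (G.kappa : ℝ) -
        (∑ e : G.E, if G.fst e = y ∨ G.snd e = y
          then (G.kappa2Sep (G.fst e) (G.snd e) : ℝ) else 0) -
        2 * (G.kappa : ℝ) * (if z = y then 1 else 0) := by
  classical
  have htog := lap_dot_tog (G := G) y z y
  rw [if_pos rfl] at htog
  have h2T : ∀ w : G.V, (G.kappa2Sep w z : ℝ) =
      (G.kappa2Sep w y : ℝ) + (G.kappa2Sep z y : ℝ) - 2 * (G.kappa2Tog w z y : ℝ) := by
    intro w
    have := sep_tog (G := G) w z y
    have hc : ((G.kappa2Sep w y + G.kappa2Sep z y : ℕ) : ℝ)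
        = ((2 * G.kappa2Tog w z y + G.kappa2Sep w z : ℕ) : ℝ) := by
      exact_mod_cast congrArg (Nat.cast (R := ℝ)) this
    push_cast at hc
    linarith
  have hA : ∑ w : G.V, G.lap y w * (G.kappa2Sep w y : ℝ) =
      - ∑ e : G.E, (if G.fst e = y ∨ G.snd e = y
        then (G.kappa2Sep (G.fst e) (G.snd e) : ℝ) else 0) := by
    rw [lap_apply_sum y (fun w => (G.kappa2Sep w y : ℝ))]
    rw [← Finset.sum_neg_distrib]
    apply Finset.sum_congr rfl
    intro e _
    by_cases hinc : G.fst e = y ∨ G.snd e = y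
    · rw [if_pos hinc, if_pos hinc, kappa2Sep_self, sep_other hinc]
      push_cast
      ring
    · rw [if_neg hinc, if_neg hinc]
      ring
  have hrow := lap_row_sum (G := G) y
  have hexp : ∀ w : G.V, G.lap y w * (G.kappa2Sep w z : ℝ) =
      G.lap y w * (G.kappa2Sep w y : ℝ) + G.lap y w * (G.kappa2Sep z y : ℝ) -
        2 * (G.lap y w * (G.kappa2Tog w z y : ℝ)) := by
    intro w
    rw [h2T w]
    ring
  rw [Finset.sum_congr rfl (fun w _ => hexp w)]
  rw [Finset.sum_sub_distrib, Finset.sum_add_distrib]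
  rw [hA]
  have hconst : ∑ w : G.V, G.lap y w * (G.kappa2Sep z y : ℝ) = 0 := by
    rw [← Finset.sum_mul, hrow, zero_mul]
  rw [hconst]
  rw [← Finset.mul_sum, htog]
  split_ifs <;> ring
end Multigraph
namespace Multigraph

variable {G : Multigraph}

lemma res_comm (x y : G.V) : G.res x y = G.res y x := by
  unfold res
  rw [kappa2Sep_comm]

lemma res_self (x : G.V) : G.res x x = 0 := by
  unfold res
  rw [kappa2Sep_self]
  simp

lemma lap_comm (v w : G.V) : G.lap v w = G.lap w v := by
  unfold lap
  have hp : Nat.card {e : G.E // (G.fst e = v ∧ G.snd e = w) ∨ (G.fst e = w ∧ G.snd e = v)} =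
      Nat.card {e : G.E // (G.fst e = w ∧ G.snd e = v) ∨ (G.fst e = v ∧ G.snd e = w)} :=
    card_subtype_congr fun e => or_comm
  rw [hp]
  by_cases hvw : v = w
  · subst hvw; rfl
  · rw [if_neg hvw, if_neg (Ne.symm hvw)]

lemma sum_ite_ends (e : G.E) (r : ℝ) :
    ∑ x : G.V, (if G.fst e = x ∨ G.snd e = x then r else 0) = 2 * r := by
  classical
  have hcond : ∀ x : G.V, (if G.fst e = x ∨ G.snd e = x then r else 0) =
      if x ∈ ({G.fst e, G.snd e} : Finset G.V) then r else 0 := by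
    intro x
    simp only [Finset.mem_insert, Finset.mem_singleton]
    congr 1
    · simp [eq_comm]
  rw [Finset.sum_congr rfl (fun x _ => hcond x)]
  rw [Finset.sum_ite_mem, Finset.univ_inter, Finset.sum_const,
    Finset.card_pair (G.no_loop e)]
  rw [nsmul_eq_mul]
  norm_num

lemma lap_dot_res (hG : G.IsConnected) (y z : G.V) :
    ∑ w : G.V, G.lap y w * G.res w z =
      2 * G.mu y - 2 * (if z = y then 1 else 0) := by
  classical
  have hk : (G.kappa : ℝ) ≠ 0 := by
    exact_mod_cast (kappa_pos hG).ne'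
  have h1 : ∑ w : G.V, G.lap y w * G.res w z =
      (∑ w : G.V, G.lap y w * (G.kappa2Sep w z : ℝ)) / (G.kappa : ℝ) := by
    rw [Finset.sum_div]
    apply Finset.sum_congr rfl
    intro w _
    unfold res
    ring
  have hmu : G.mu y = 1 - (1/2) *
      ((∑ e : G.E, if G.fst e = y ∨ G.snd e = y
        then (G.kappa2Sep (G.fst e) (G.snd e) : ℝ) else 0) / (G.kappa : ℝ)) := by
    unfold mu
    rw [Finset.sum_div]
    congr 2
    apply Finset.sum_congr rfl
    intro e _
    unfold res
    split_ifs <;> simp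
  rw [h1, lap_dot_sep, hmu]
  split_ifs <;> field_simp

lemma mu_sum (hG : G.IsConnected) : ∑ x : G.V, G.mu x = 1 := by
  classical
  have hk : (G.kappa : ℝ) ≠ 0 := by
    exact_mod_cast (kappa_pos hG).ne'
  unfold mu
  rw [Finset.sum_sub_distrib]
  rw [Finset.sum_const, Finset.card_univ, nsmul_eq_mul, mul_one]
  rw [← Finset.mul_sum]
  rw [Finset.sum_comm]
  have hinner : ∀ e : G.E,
      ∑ x : G.V, (if G.fst e = x ∨ G.snd e = x then G.res (G.fst e) (G.snd e) else 0) =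
      2 * G.res (G.fst e) (G.snd e) := fun e => sum_ite_ends e _
  rw [Finset.sum_congr rfl (fun e _ => hinner e)]
  rw [← Finset.mul_sum]
  have hfoster := foster (G := G)
  have hcast : (∑ e : G.E, (G.kappa2Sep (G.fst e) (G.snd e) : ℝ)) + (G.kappa : ℝ) =
      (Fintype.card G.V : ℝ) * (G.kappa : ℝ) := by
    exact_mod_cast congrArg (Nat.cast (R := ℝ)) hfoster
  have hres : ∑ e : G.E, G.res (G.fst e) (G.snd e) =
      (∑ e : G.E, (G.kappa2Sep (G.fst e) (G.snd e) : ℝ)) / (G.kappa : ℝ) := by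
    rw [Finset.sum_div]
    apply Finset.sum_congr rfl
    intro e _
    unfold res
    ring
  rw [hres]
  field_simp
  linarith

end Multigraph
theorem res_lap_res_identity (G : Multigraph) (hG : G.IsConnected) :
    G.resMatrix + (1/2 : ℝ) • (G.resMatrix * G.lap * G.resMatrix) =
      (G.mu ⬝ᵥ G.resMatrix.mulVec G.mu) •
        Matrix.vecMulVec (fun _ => (1 : ℝ)) (fun _ => (1 : ℝ)) := by
  classical
  open Multigraph in
  have hLR : ∀ y z : G.V, (G.lap * G.resMatrix) y z =
      2 * G.mu y - 2 * (if z = y then 1 else 0) := by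
    intro y z
    rw [Matrix.mul_apply]
    exact Multigraph.lap_dot_res hG y z
  have hc : ∀ x z : G.V,
      G.res x z + (1/2 : ℝ) * ∑ y : G.V, G.res x y * ((G.lap * G.resMatrix) y z)
        = ∑ y : G.V, G.res x y * G.mu y := by
    intro x z
    have hterm : ∀ y : G.V, G.res x y * ((G.lap * G.resMatrix) y z) =
        2 * (G.res x y * G.mu y) - 2 * (if z = y then G.res x y else 0) := by
      intro y
      rw [hLR y z]
      split_ifs <;> ring
    rw [Finset.sum_congr rfl (fun y _ => hterm y)]
    rw [Finset.sum_sub_distrib, ← Finset.mul_sum, ← Finset.mul_sum]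
    rw [Finset.sum_ite_eq Finset.univ z (fun y => G.res x y), if_pos (Finset.mem_univ z)]
    ring
  have hdouble : ∀ x z : G.V,
      ∑ y : G.V, G.res x y * ((G.lap * G.resMatrix) y z)
        = ∑ y : G.V, G.res z y * ((G.lap * G.resMatrix) y x) := by
    intro x z
    have e1 : ∀ (a b : G.V), (G.lap * G.resMatrix) a b = ∑ w : G.V, G.lap a w * G.res w b :=
      fun a b => Matrix.mul_apply
    calc ∑ y : G.V, G.res x y * ((G.lap * G.resMatrix) y z)
        = ∑ y : G.V, ∑ w : G.V, G.res x y * (G.lap y w * G.res w z) := by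
          apply Finset.sum_congr rfl
          intro y _
          rw [e1, Finset.mul_sum]
      _ = ∑ w : G.V, ∑ y : G.V, G.res x y * (G.lap y w * G.res w z) := Finset.sum_comm
      _ = ∑ w : G.V, ∑ y : G.V, G.res z w * (G.lap w y * G.res y x) := by
          apply Finset.sum_congr rfl
          intro w _
          apply Finset.sum_congr rfl
          intro y _
          rw [Multigraph.res_comm (G := G) x y, Multigraph.lap_comm (G := G) y w,
            Multigraph.res_comm (G := G) w z]
          ring
      _ = ∑ w : G.V, G.res z w * ((G.lap * G.resMatrix) w x) := by
          apply Finset.sum_congr rfl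
          intro w _
          rw [e1, Finset.mul_sum]
  have hconst : ∀ x z : G.V,
      ∑ y : G.V, G.res x y * G.mu y = ∑ y : G.V, G.res z y * G.mu y := by
    intro x z
    have h1 := hc x z
    have h2 := hc z x
    have h3 := hdouble x z
    have h4 : G.res x z = G.res z x := Multigraph.res_comm (G := G) x z
    linarith
  rw [Matrix.mul_assoc]
  ext i j
  have hRLR : (G.resMatrix * (G.lap * G.resMatrix)) i j =
      ∑ y : G.V, G.res i y * ((G.lap * G.resMatrix) y j) := Matrix.mul_apply
  have hR : (G.mu ⬝ᵥ G.resMatrix.mulVec G.mu) = ∑ y : G.V, G.res i y * G.mu y := by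
    have hdp : (G.mu ⬝ᵥ G.resMatrix.mulVec G.mu) =
        ∑ x : G.V, G.mu x * ∑ y : G.V, G.res x y * G.mu y := rfl
    rw [hdp]
    calc ∑ x : G.V, G.mu x * ∑ y : G.V, G.res x y * G.mu y
        = ∑ x : G.V, G.mu x * ∑ y : G.V, G.res i y * G.mu y := by
          apply Finset.sum_congr rfl
          intro x _
          rw [hconst x i]
      _ = (∑ x : G.V, G.mu x) * ∑ y : G.V, G.res i y * G.mu y := by
          rw [Finset.sum_mul]
      _ = ∑ y : G.V, G.res i y * G.mu y := by
          rw [Multigraph.mu_sum hG, one_mul]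
  show G.resMatrix i j + (1/2 : ℝ) * (G.resMatrix * (G.lap * G.resMatrix)) i j =
      (G.mu ⬝ᵥ G.resMatrix.mulVec G.mu) * ((fun _ => (1:ℝ)) i * (fun _ => (1:ℝ)) j)
  rw [hRLR, hR]
  have := hc i j
  simpa [Multigraph.resMatrix] using this
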